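/- Let C ∈ ℝ^{n×n} be symmetric positive definite and let G : ℝⁿ → ℝᵖ be bounded and continuous. For m ∈ ℝⁿ let ρ_m(θ) = ((2π)ⁿ det C)^{-1/2} exp(−½⟨θ − m, C⁻¹(θ − m)⟩) denote the Gaussian density with mean m and covariance C, and define the averaged function FG(m) = ∫_{ℝⁿ} G(θ) ρ_m(θ) dθ and the averaged gradient FdG(m) = (∫_{ℝⁿ} (G(θ) − FG(m))(θ − m)ᵀ ρ_m(θ) dθ) · C⁻¹ ∈ ℝ^{p×n}. Then FG is differentiable in m and its Jacobian matrix at every m ∈ ℝⁿ equals FdG(m). -/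

import Mathlib

/-!
Differentiate under the integral sign. The mean enters only through the density, with
`∂ₘ ρ_m(θ) = ρ_m(θ) ⟪C⁻¹(θ - m), ·⟫`. Since `C⁻¹` is coercive, `ρ_x(θ) (1 + ‖θ - x‖)` is bounded
by one Gaussian in `θ` uniformly for `x` in the unit ball around `m`, which dominates the
derivative of the bounded integrand. The resulting Jacobian `∫ G(θ) (θ - m)ᵀ ρ_m(θ) dθ · C⁻¹`
is `FdG(m)` because the first centred moment `∫ (θ - m) ρ_m(θ) dθ` vanishes by the symmetry
`θ ↦ 2m - θ`, so centring `G` at `FG(m)` changes nothing.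
-/

open Matrix MeasureTheory

/-- The Gaussian density on `ℝⁿ` with mean `m` and covariance `C`:
`ρ_m(θ) = ((2π)ⁿ det C)^{-1/2} exp(−½⟨θ − m, C⁻¹(θ − m)⟩)`. -/
noncomputable def gaussDensity {n : ℕ} (C : Matrix (Fin n) (Fin n) ℝ)
    (m θ : EuclideanSpace ℝ (Fin n)) : ℝ :=
  ((2 * Real.pi) ^ n * C.det) ^ (-(1 : ℝ) / 2) *
    Real.exp (-(1 / 2) * ((θ - m) ⬝ᵥ (C⁻¹ *ᵥ (θ - m))))

/-- The averaged function `FG(m) = ∫ G(θ) ρ_m(θ) dθ`. -/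
noncomputable def avgFun {n p : ℕ} (C : Matrix (Fin n) (Fin n) ℝ)
    (G : EuclideanSpace ℝ (Fin n) → EuclideanSpace ℝ (Fin p))
    (m : EuclideanSpace ℝ (Fin n)) : EuclideanSpace ℝ (Fin p) :=
  ∫ θ, gaussDensity C m θ • G θ

/-- The averaged gradient
`FdG(m) = (∫ (G(θ) − FG(m)) (θ − m)ᵀ ρ_m(θ) dθ) · C⁻¹`. -/
noncomputable def avgGrad {n p : ℕ} (C : Matrix (Fin n) (Fin n) ℝ)
    (G : EuclideanSpace ℝ (Fin n) → EuclideanSpace ℝ (Fin p))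
    (m : EuclideanSpace ℝ (Fin n)) : Matrix (Fin p) (Fin n) ℝ :=
  (Matrix.of fun i j =>
      ∫ θ, gaussDensity C m θ * ((G θ i - avgFun C G m i) * (θ j - m j))) * C⁻¹

open scoped RealInnerProductSpace
open Real Metric

theorem exists_pos_mul_norm_sq_le {E : Type*} [NormedAddCommGroup E] [NormedSpace ℝ E]
    [FiniteDimensional ℝ E] {Q : E → ℝ} (hQ : Continuous Q)
    (hQ_smul : ∀ (c : ℝ) u, Q (c • u) = c ^ 2 * Q u) (hQ_pos : ∀ u ≠ 0, 0 < Q u) :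
    ∃ α > 0, ∀ u, α * ‖u‖ ^ 2 ≤ Q u := by
  have hQ_zero : Q 0 = 0 := by simpa using hQ_smul 0 0
  rcases subsingleton_or_nontrivial E with _ | _
  · exact ⟨1, one_pos, fun u => by simp [Subsingleton.elim u 0, hQ_zero]⟩
  obtain ⟨u₀, hu₀, hmin⟩ := (isCompact_sphere (0 : E) 1).exists_isMinOn
    (NormedSpace.sphere_nonempty.mpr zero_le_one) hQ.continuousOn
  refine ⟨Q u₀, hQ_pos u₀ (ne_of_mem_sphere hu₀ one_ne_zero), fun u => ?_⟩
  rcases eq_or_ne u 0 with rfl | hu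
  · simp [hQ_zero]
  have hu' : ‖u‖ ≠ 0 := norm_ne_zero_iff.mpr hu
  calc Q u₀ * ‖u‖ ^ 2 ≤ Q (‖u‖⁻¹ • u) * ‖u‖ ^ 2 := by
        gcongr
        exact hmin (by simp [norm_smul, hu'])
    _ = Q u := by rw [hQ_smul]; field_simp

theorem Matrix.PosDef.exists_pos_mul_norm_sq_le_inner {ι : Type*} [Fintype ι] [DecidableEq ι]
    {A : Matrix ι ι ℝ} (hA : A.PosDef) :
    ∃ α > 0, ∀ u : EuclideanSpace ℝ ι, α * ‖u‖ ^ 2 ≤ ⟪u, toEuclideanCLM (𝕜 := ℝ) A u⟫ := by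
  refine exists_pos_mul_norm_sq_le (by fun_prop) (fun c u => ?_) (fun u hu => ?_)
  · rw [map_smul, inner_smul_left, inner_smul_right]
    simp only [conj_trivial]
    ring
  · rw [inner_toEuclideanCLM]
    simpa using hA.dotProduct_mulVec_pos (x := WithLp.ofLp u) (by simpa using hu)

theorem one_add_le_mul_exp_mul_sq {b : ℝ} (hb : 0 < b) (s : ℝ) :
    1 + s ≤ (1 + 1 / b) * exp (b * s ^ 2) := by
  have hs : s ≤ 1 / b + b * s ^ 2 := by
    rw [← sub_nonneg, show 1 / b + b * s ^ 2 - s = ((b * s - 1 / 2) ^ 2 + 3 / 4) / b by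
      field_simp; ring]
    positivity
  calc 1 + s ≤ (1 + 1 / b) * (1 + b * s ^ 2) := by
        nlinarith [mul_nonneg (one_div_pos.mpr hb).le (by positivity : 0 ≤ b * s ^ 2)]
    _ ≤ (1 + 1 / b) * exp (b * s ^ 2) := by gcongr; linarith [add_one_le_exp (b * s ^ 2)]

theorem exp_neg_mul_norm_sub_sq_le {E : Type*} [SeminormedAddCommGroup E] {b : ℝ} (hb : 0 ≤ b)
    {x m : E} (hx : ‖x - m‖ ≤ 1) (θ : E) :
    exp (-(b * ‖θ - x‖ ^ 2)) ≤ exp b * exp (-(b / 2 * ‖θ - m‖ ^ 2)) := by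
  have htri : ‖θ - m‖ ≤ ‖θ - x‖ + 1 :=
    (norm_sub_le_norm_sub_add_norm_sub θ x m).trans (by gcongr)
  rw [← exp_add, exp_le_exp]
  nlinarith [mul_le_mul htri htri (norm_nonneg _) (by positivity), sq_nonneg (‖θ - x‖ - 1)]

theorem integrable_exp_neg_mul_norm_sub_sq {V : Type*} [NormedAddCommGroup V]
    [InnerProductSpace ℝ V] [FiniteDimensional ℝ V] [MeasurableSpace V] [BorelSpace V]
    {c : ℝ} (hc : 0 < c) (m : V) :
    Integrable (fun θ : V => exp (-(c * ‖θ - m‖ ^ 2))) := by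
  have h := (GaussianFourier.integrable_cexp_neg_mul_sq_norm_add (b := c) (by simpa using hc) 0
    (0 : V)).norm
  refine Integrable.comp_sub_right (f := fun v : V => exp (-(c * ‖v‖ ^ 2)))
    (h.congr (Filter.Eventually.of_forall fun v => ?_)) m
  norm_cast; simp

theorem integral_eq_zero_of_apply_sub_eq_neg {G E : Type*} [MeasurableSpace G]
    [NormedAddCommGroup E] [NormedSpace ℝ E] [AddGroup G] [MeasurableAdd G] [MeasurableNeg G]
    (μ : Measure G) [μ.IsNegInvariant] [μ.IsAddLeftInvariant] {f : G → E} (a : G)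
    (hf : ∀ x, f (a - x) = -f x) : ∫ x, f x ∂μ = 0 := by
  have h := integral_sub_left_eq_self f μ a
  simp_rw [hf, integral_neg] at h
  have h2 : (2 : ℝ) • ∫ x, f x ∂μ = 0 := by
    rw [two_smul]; nth_rw 1 [← h]; exact neg_add_cancel _
  exact (smul_eq_zero.mp h2).resolve_left two_ne_zero

theorem hasFDerivAt_inner_sub_apply_sub {E : Type*} [NormedAddCommGroup E]
    [InnerProductSpace ℝ E] {T : E →L[ℝ] E} (hT : ∀ u v, ⟪T u, v⟫ = ⟪u, T v⟫) (θ m : E) :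
    HasFDerivAt (fun x => ⟪θ - x, T (θ - x)⟫) (-(2 : ℝ) • innerSL ℝ (T (θ - m))) m := by
  have hsub := (hasFDerivAt_id (𝕜 := ℝ) m).const_sub θ
  refine (hsub.inner ℝ (T.hasFDerivAt.comp m hsub)).congr_fderiv ?_
  ext v
  simp only [ContinuousLinearMap.comp_apply, ContinuousLinearMap.prod_apply, fderivInnerCLM_apply,
    _root_.neg_apply, ContinuousLinearMap.id_apply, _root_.smul_apply, coe_innerSL_apply,
    Function.comp_apply, id_eq, map_neg, inner_neg_left, inner_neg_right, smul_eq_mul]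
  linarith [hT (θ - m) v, real_inner_comm (T (θ - m)) v]

theorem norm_smulRight_innerSL_le {E F : Type*} [NormedAddCommGroup E] [InnerProductSpace ℝ E]
    [NormedAddCommGroup F] [NormedSpace ℝ F] (T : E →L[ℝ] E) (u : E) {y : F} {M : ℝ}
    (hy : ‖y‖ ≤ M) : ‖(innerSL ℝ (T u)).smulRight y‖ ≤ ‖T‖ * M * (1 + ‖u‖) := by
  have hM : 0 ≤ M := (norm_nonneg y).trans hy
  rw [ContinuousLinearMap.norm_smulRight_apply, innerSL_apply_norm]
  calc ‖T u‖ * ‖y‖ ≤ ‖T‖ * (1 + ‖u‖) * M := by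
        gcongr
        exact (T.le_opNorm u).trans (by gcongr; linarith)
    _ = ‖T‖ * M * (1 + ‖u‖) := by ring

theorem Matrix.of_integral_mulVec {α ι κ : Type*} [MeasurableSpace α] {μ : Measure α}
    [Fintype κ] {F : α → ι → κ → ℝ} (hF : ∀ i k, Integrable (fun a => F a i k) μ) (w : κ → ℝ) :
    (Matrix.of fun i k => ∫ a, F a i k ∂μ) *ᵥ w = fun i => ∫ a, ∑ k, F a i k * w k ∂μ := by
  ext i
  simp only [mulVec, dotProduct, of_apply, ← integral_mul_const]
  exact (integral_finsetSum _ fun k _ => (hF i k).mul_const _).symm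

section GaussianAverage

variable {n p : ℕ} {C : Matrix (Fin n) (Fin n) ℝ}

variable (C) in
theorem gaussDensity_eq_mul_exp_inner (m θ : EuclideanSpace ℝ (Fin n)) :
    gaussDensity C m θ = ((2 * π) ^ n * C.det) ^ (-(1 : ℝ) / 2) *
      exp (-(1 / 2) * ⟪θ - m, toEuclideanCLM (𝕜 := ℝ) C⁻¹ (θ - m)⟫) := by
  rw [gaussDensity, inner_toEuclideanCLM, WithLp.ofLp_sub]

variable (C) in
theorem continuous_gaussDensity (m : EuclideanSpace ℝ (Fin n)) :
    Continuous (gaussDensity C m) := by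
  simp_rw [funext (gaussDensity_eq_mul_exp_inner C m)]
  fun_prop

theorem gaussDensity_nonneg (hC : 0 ≤ C.det) (m θ : EuclideanSpace ℝ (Fin n)) :
    0 ≤ gaussDensity C m θ := by
  unfold gaussDensity
  positivity

variable (C) in
theorem gaussDensity_reflect (m θ : EuclideanSpace ℝ (Fin n)) :
    gaussDensity C m (m + m - θ) = gaussDensity C m θ := by
  rw [gaussDensity_eq_mul_exp_inner, gaussDensity_eq_mul_exp_inner,
    show m + m - θ - m = -(θ - m) by abel, map_neg, inner_neg_neg]

theorem exists_gaussDensity_mul_le (hC : C.PosDef) :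
    ∃ c ≥ 0, ∃ β > 0, ∀ m θ : EuclideanSpace ℝ (Fin n),
      gaussDensity C m θ * (1 + ‖θ - m‖) ≤ c * exp (-(β * ‖θ - m‖ ^ 2)) := by
  obtain ⟨α, hα, hq⟩ := hC.inv.exists_pos_mul_norm_sq_le_inner
  set c₀ := ((2 * π) ^ n * C.det) ^ (-(1 : ℝ) / 2)
  have hc₀ : 0 ≤ c₀ := by have := hC.det_pos; positivity
  refine ⟨c₀ * (1 + 1 / (α / 4)), by positivity, α / 4, by positivity, fun m θ => ?_⟩
  have hρ : gaussDensity C m θ ≤ c₀ * exp (-(α / 2 * ‖θ - m‖ ^ 2)) := by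
    rw [gaussDensity_eq_mul_exp_inner]
    gcongr
    linarith [hq (θ - m)]
  calc gaussDensity C m θ * (1 + ‖θ - m‖)
      ≤ c₀ * exp (-(α / 2 * ‖θ - m‖ ^ 2)) * ((1 + 1 / (α / 4)) * exp (α / 4 * ‖θ - m‖ ^ 2)) :=
        mul_le_mul hρ (one_add_le_mul_exp_mul_sq (by positivity) _) (by positivity)
          (by positivity)
    _ = c₀ * (1 + 1 / (α / 4)) * exp (-(α / 4 * ‖θ - m‖ ^ 2)) := by
        rw [mul_mul_mul_comm, ← exp_add]
        ring_nf

theorem integrable_gaussDensity_smul {V : Type*} [NormedAddCommGroup V] [NormedSpace ℝ V]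
    (hC : C.PosDef) (m : EuclideanSpace ℝ (Fin n)) {f : EuclideanSpace ℝ (Fin n) → V}
    (hf : AEStronglyMeasurable f) {K : ℝ} (hfK : ∀ θ, ‖f θ‖ ≤ K * (1 + ‖θ - m‖)) :
    Integrable (fun θ => gaussDensity C m θ • f θ) := by
  obtain ⟨c, hc, β, hβ, hρ⟩ := exists_gaussDensity_mul_le hC
  have hK : 0 ≤ K := by simpa using (norm_nonneg _).trans (hfK m)
  refine ((integrable_exp_neg_mul_norm_sub_sq hβ m).const_mul (K * c)).mono'
    ((continuous_gaussDensity C m).aestronglyMeasurable.smul hf)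
    (Filter.Eventually.of_forall fun θ => ?_)
  have hρ0 := gaussDensity_nonneg hC.det_pos.le m θ
  rw [norm_smul, Real.norm_of_nonneg hρ0]
  calc gaussDensity C m θ * ‖f θ‖ ≤ K * (gaussDensity C m θ * (1 + ‖θ - m‖)) := by
        rw [mul_left_comm]; gcongr; exact hfK θ
    _ ≤ K * (c * exp (-(β * ‖θ - m‖ ^ 2))) := mul_le_mul_of_nonneg_left (hρ m θ) hK
    _ = K * c * exp (-(β * ‖θ - m‖ ^ 2)) := by ring

theorem hasFDerivAt_gaussDensity (hC : C.IsHermitian) (θ m : EuclideanSpace ℝ (Fin n)) :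
    HasFDerivAt (fun x => gaussDensity C x θ)
      (gaussDensity C m θ • innerSL ℝ (toEuclideanCLM (𝕜 := ℝ) C⁻¹ (θ - m))) m := by
  have hq := hasFDerivAt_inner_sub_apply_sub (T := toEuclideanCLM (𝕜 := ℝ) C⁻¹)
    ((isSymmetric_toEuclideanLin_iff (𝕜 := ℝ)).mpr hC.inv) θ m
  simp_rw [gaussDensity_eq_mul_exp_inner C _ θ]
  refine ((hq.const_mul (-(1 / 2))).exp.const_mul _).congr_fderiv ?_
  simp only [smul_smul]
  ring_nf

variable (C) in
theorem integral_gaussDensity_mul_inner_sub (m w : EuclideanSpace ℝ (Fin n)) :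
    ∫ θ, gaussDensity C m θ * ⟪θ - m, w⟫ = 0 :=
  integral_eq_zero_of_apply_sub_eq_neg volume (m + m) fun θ => by
    rw [gaussDensity_reflect, show m + m - θ - m = -(θ - m) by abel, inner_neg_left, mul_neg]

theorem hasFDerivAt_avgFun (hC : C.PosDef)
    {G : EuclideanSpace ℝ (Fin n) → EuclideanSpace ℝ (Fin p)} (hG : AEStronglyMeasurable G)
    {M : ℝ} (hGM : ∀ θ, ‖G θ‖ ≤ M) (m : EuclideanSpace ℝ (Fin n)) :
    HasFDerivAt (avgFun C G) (∫ θ, gaussDensity C m θ •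
      (innerSL ℝ (toEuclideanCLM (𝕜 := ℝ) C⁻¹ (θ - m))).smulRight (G θ)) m := by
  set T : EuclideanSpace ℝ (Fin n) →L[ℝ] EuclideanSpace ℝ (Fin n) := toEuclideanCLM (𝕜 := ℝ) C⁻¹
  obtain ⟨c, hc, β, hβ, hρ⟩ := exists_gaussDensity_mul_le hC
  have hM : 0 ≤ M := (norm_nonneg _).trans (hGM 0)
  have hF'_le : ∀ x ∈ ball m 1, ∀ θ,
      ‖gaussDensity C x θ • (innerSL ℝ (T (θ - x))).smulRight (G θ)‖
        ≤ ‖T‖ * M * c * exp β * exp (-(β / 2 * ‖θ - m‖ ^ 2)) := by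
    intro x hx θ
    have hρ0 := gaussDensity_nonneg hC.det_pos.le x θ
    have hxm : ‖x - m‖ ≤ 1 := by simpa [dist_eq_norm] using (mem_ball.mp hx).le
    calc ‖gaussDensity C x θ • (innerSL ℝ (T (θ - x))).smulRight (G θ)‖
        ≤ gaussDensity C x θ * (‖T‖ * M * (1 + ‖θ - x‖)) := by
          rw [norm_smul, Real.norm_of_nonneg hρ0]
          gcongr
          exact norm_smulRight_innerSL_le T _ (hGM θ)
      _ = ‖T‖ * M * (gaussDensity C x θ * (1 + ‖θ - x‖)) := by ring
      _ ≤ ‖T‖ * M * (c * (exp β * exp (-(β / 2 * ‖θ - m‖ ^ 2)))) := by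
          refine mul_le_mul_of_nonneg_left ((hρ x θ).trans (mul_le_mul_of_nonneg_left ?_ hc))
            (by positivity)
          exact exp_neg_mul_norm_sub_sq_le hβ.le hxm θ
      _ = _ := by ring
  refine hasFDerivAt_integral_of_dominated_of_fderiv_le (ball_mem_nhds m one_pos)
    (Filter.Eventually.of_forall fun x =>
      (continuous_gaussDensity C x).aestronglyMeasurable.smul hG)
    (integrable_gaussDensity_smul hC m hG (K := M) fun θ => by
      nlinarith [hGM θ, norm_nonneg (θ - m)])
    ((continuous_gaussDensity C m).aestronglyMeasurable.smul
      ((ContinuousLinearMap.smulRightL ℝ _ _).continuous₂.comp_aestronglyMeasurable₂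
        (by fun_prop) hG))
    (ae_of_all _ fun θ x hx => hF'_le x hx θ)
    ((integrable_exp_neg_mul_norm_sub_sq (half_pos hβ) m).const_mul _)
    (ae_of_all _ fun θ x _ =>
      ((hasFDerivAt_gaussDensity hC.isHermitian θ x).smul_const (G θ)).congr_fderiv ?_)
  ext v : 1
  simp [T, smul_smul]

theorem integral_gaussDensity_mul_inner_mul_sub_const (hC : C.PosDef)
    (m w : EuclideanSpace ℝ (Fin n)) {f : EuclideanSpace ℝ (Fin n) → ℝ}
    (hf : Integrable fun θ => gaussDensity C m θ * (⟪θ - m, w⟫ * f θ)) (a : ℝ) :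
    ∫ θ, gaussDensity C m θ * (⟪θ - m, w⟫ * (f θ - a))
      = ∫ θ, gaussDensity C m θ * (⟪θ - m, w⟫ * f θ) := by
  have hinner : Integrable fun θ => gaussDensity C m θ * ⟪θ - m, w⟫ :=
    integrable_gaussDensity_smul hC m (by fun_prop) fun θ => (norm_inner_le_norm _ _).trans
      (by nlinarith [norm_nonneg w, norm_nonneg (θ - m)])
  calc ∫ θ, gaussDensity C m θ * (⟪θ - m, w⟫ * (f θ - a))
      = ∫ θ, (gaussDensity C m θ * (⟪θ - m, w⟫ * f θ)
          - a * (gaussDensity C m θ * ⟪θ - m, w⟫)) := by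
        congr 1 with θ
        ring
    _ = ∫ θ, gaussDensity C m θ * (⟪θ - m, w⟫ * f θ) := by
        rw [integral_sub hf (hinner.const_mul a), integral_const_mul,
          integral_gaussDensity_mul_inner_sub, mul_zero, sub_zero]

theorem avgGrad_mulVec_apply (hC : C.PosDef)
    {G : EuclideanSpace ℝ (Fin n) → EuclideanSpace ℝ (Fin p)} (hG : AEStronglyMeasurable G)
    {M : ℝ} (hGM : ∀ θ, ‖G θ‖ ≤ M) (m v : EuclideanSpace ℝ (Fin n)) (i : Fin p) :
    (avgGrad C G m *ᵥ v) i
      = ∫ θ, gaussDensity C m θ * (⟪θ - m, toEuclideanCLM (𝕜 := ℝ) C⁻¹ v⟫ * G θ i) := by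
  set w := toEuclideanCLM (𝕜 := ℝ) C⁻¹ v
  set g := avgFun C G m
  have hGi_le : ∀ θ i, ‖G θ i‖ ≤ M := fun θ i => (PiLp.norm_apply_le _ i).trans (hGM θ)
  have hM : 0 ≤ M := (norm_nonneg _).trans (hGM 0)
  have hentry : ∀ i k,
      Integrable fun θ => gaussDensity C m θ * ((G θ i - g i) * (θ k - m k)) := by
    intro i k
    refine integrable_gaussDensity_smul hC m (by fun_prop) (K := M + ‖g i‖) fun θ => ?_
    have hk : ‖θ k - m k‖ ≤ ‖θ - m‖ := by simpa using PiLp.norm_apply_le (θ - m) k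
    rw [norm_mul]
    exact mul_le_mul ((norm_sub_le _ _).trans (add_le_add_left (hGi_le θ i) _))
      (hk.trans (by linarith)) (norm_nonneg _) (add_nonneg hM (norm_nonneg _))
  have hinner_G : Integrable fun θ => gaussDensity C m θ * (⟪θ - m, w⟫ * G θ i) := by
    refine integrable_gaussDensity_smul hC m (by fun_prop) (K := ‖w‖ * M) fun θ => ?_
    rw [norm_mul]
    calc ‖⟪θ - m, w⟫‖ * ‖G θ i‖ ≤ ‖θ - m‖ * ‖w‖ * M :=
          mul_le_mul (norm_inner_le_norm _ _) (hGi_le θ i) (norm_nonneg _) (by positivity)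
      _ ≤ ‖w‖ * M * (1 + ‖θ - m‖) := by nlinarith [norm_nonneg w, norm_nonneg (θ - m)]
  rw [← integral_gaussDensity_mul_inner_mul_sub_const hC m w hinner_G (g i), avgGrad,
    ← mulVec_mulVec, Matrix.of_integral_mulVec hentry]
  refine integral_congr_ae (ae_of_all _ fun θ => ?_)
  have hcoord : ⟪θ - m, w⟫ = ∑ k, (θ k - m k) * (C⁻¹ *ᵥ v) k := by
    simp [w, PiLp.inner_apply, mul_comm]
  dsimp only
  rw [hcoord, Finset.sum_mul, Finset.mul_sum]
  exact Finset.sum_congr rfl fun k _ => by ring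

theorem integral_gaussDensity_smul_smulRight_eq_avgGrad (hC : C.PosDef)
    {G : EuclideanSpace ℝ (Fin n) → EuclideanSpace ℝ (Fin p)} (hG : AEStronglyMeasurable G)
    {M : ℝ} (hGM : ∀ θ, ‖G θ‖ ≤ M) (m : EuclideanSpace ℝ (Fin n)) :
    ∫ θ, gaussDensity C m θ • (innerSL ℝ (toEuclideanCLM (𝕜 := ℝ) C⁻¹ (θ - m))).smulRight (G θ)
      = LinearMap.toContinuousLinearMap (toEuclideanLin (avgGrad C G m)) := by
  set T : EuclideanSpace ℝ (Fin n) →L[ℝ] EuclideanSpace ℝ (Fin n) := toEuclideanCLM (𝕜 := ℝ) C⁻¹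
  have hT : ∀ u v, ⟪T u, v⟫ = ⟪u, T v⟫ :=
    (isSymmetric_toEuclideanLin_iff (𝕜 := ℝ)).mpr hC.isHermitian.inv
  have hint : Integrable fun θ =>
      gaussDensity C m θ • (innerSL ℝ (T (θ - m))).smulRight (G θ) :=
    integrable_gaussDensity_smul hC m (by fun_prop) fun θ => norm_smulRight_innerSL_le T _ (hGM θ)
  ext v i
  calc (∫ θ, gaussDensity C m θ • (innerSL ℝ (T (θ - m))).smulRight (G θ)) v i
      = ∫ θ, (gaussDensity C m θ • (innerSL ℝ (T (θ - m))).smulRight (G θ)) v i := by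
        rw [ContinuousLinearMap.integral_apply hint]
        exact ((EuclideanSpace.proj i).integral_comp_comm (hint.apply_continuousLinearMap v)).symm
    _ = ∫ θ, gaussDensity C m θ * (⟪θ - m, T v⟫ * G θ i) := by
        simp [hT, inner_sub_left]
    _ = (avgGrad C G m *ᵥ v) i := (avgGrad_mulVec_apply hC hG hGM m v i).symm

end GaussianAverage

/-- Let `C` be symmetric positive definite and `G : ℝⁿ → ℝᵖ`
bounded and continuous. Then the averaged function `FG` is differentiable in `m`
and its Jacobian at every `m` is the averaged gradient `FdG(m)`. -/
theorem avgFun_hasFDerivAt_avgGrad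
    {n p : ℕ}
    (C : Matrix (Fin n) (Fin n) ℝ) (hC : C.PosDef)
    (G : EuclideanSpace ℝ (Fin n) → EuclideanSpace ℝ (Fin p))
    (hGcont : Continuous G) (hGbdd : ∃ M : ℝ, ∀ θ, ‖G θ‖ ≤ M) :
    ∀ m : EuclideanSpace ℝ (Fin n),
      HasFDerivAt (avgFun C G)
        (LinearMap.toContinuousLinearMap (Matrix.toEuclideanLin (avgGrad C G m))) m := by
  intro m
  obtain ⟨M, hGM⟩ := hGbdd
  rw [← integral_gaussDensity_smul_smulRight_eq_avgGrad hC hGcont.aestronglyMeasurable hGM m]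
  exact hasFDerivAt_avgFun hC hGcont.aestronglyMeasurable hGM m
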